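/- arXiv:2008.02716 — 4 statements merged into one kernel-verified Lean document; each statement's English description precedes it below -/
import Mathlib

section
/- The function L(ω) = π + i log(A_-(ω)/A_+(ω)) is real-valued and real analytic on ℝ, and L(0) = π/3. -/
open Complex Real

/-- `Ai` is the Airy function: the unique entire solution of `Ai'' z = z * Ai z`
with the standard initial values. -/
def IsAiry (Ai : ℂ → ℂ) : Prop :=
  Differentiable ℂ Ai ∧ Differentiable ℂ (deriv Ai) ∧
  (∀ z : ℂ, deriv (deriv Ai) z = z * Ai z) ∧
  Ai 0 = 1 / ((3 : ℂ) ^ ((2 : ℂ) / 3) * Complex.Gamma (2 / 3)) ∧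
  deriv Ai 0 = -(1 / ((3 : ℂ) ^ ((1 : ℂ) / 3) * Complex.Gamma (1 / 3)))

/-!
The Taylor coefficients of `Ai` at `0` are real: `Ai 0` and `Ai' 0` are, and `Ai'' = z Ai` gives
`Ai⁽ⁿ⁺²⁾(0) = n Ai⁽ⁿ⁻¹⁾(0)`. Hence `Ai (conj z) = conj (Ai z)`, and on the real line
`A₋ = conj A₊`. Since `c ^ 3 = conj c ^ 3` for `c = e^{-iπ/3}`, the Wronskian of `Ai (c z)` and
`Ai (conj c z)` is constant, equal to `Ai 0 Ai' 0 (conj c - c) ≠ 0`; a real zero of `A₊` would be a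
common zero of both, so `A₊` does not vanish on `ℝ`. Thus `A₋ / A₊` is a real-analytic map from `ℝ`
to the unit circle. Lifting it through the covering `exp` gives a continuous argument `θ` with
`θ 0 = 2π/3`, which is real-analytic because near each point it is a branch of `-i log`, and
`L = π - θ`.
-/

open ComplexConjugate

-- At `n = 0` the truncated `n - 1` is harmless: the factor `n` vanishes.
theorem iteratedDeriv_add_two_zero_of_airy {f : ℂ → ℂ} (hf : Differentiable ℂ f)
    (hode : ∀ z, deriv (deriv f) z = z * f z) (n : ℕ) :
    iteratedDeriv (n + 2) f 0 = n * iteratedDeriv (n - 1) f 0 := by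
  rw [iteratedDeriv_succ', iteratedDeriv_succ', funext hode,
    iteratedDeriv_fun_mul (f := fun z => z) (contDiffAt_id.of_le le_top)
      (hf.contDiff.contDiffAt.of_le le_top), Finset.sum_eq_single 1]
  · cases n <;> simp [iteratedDeriv_fun_id_zero]
  · intro i _ hi
    simp [iteratedDeriv_fun_id_zero, hi]
  · cases n <;> simp

theorem conj_iteratedDeriv_zero_of_airy {f : ℂ → ℂ} (hf : Differentiable ℂ f)
    (hode : ∀ z, deriv (deriv f) z = z * f z) (h₀ : conj (f 0) = f 0)
    (h₁ : conj (deriv f 0) = deriv f 0) (n : ℕ) :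
    conj (iteratedDeriv n f 0) = iteratedDeriv n f 0 := by
  induction n using Nat.strong_induction_on with
  | _ n ih =>
    match n with
    | 0 => simpa using h₀
    | 1 => simpa using h₁
    | m + 2 =>
      rw [iteratedDeriv_add_two_zero_of_airy hf hode, map_mul, conj_natCast,
        ih (m - 1) (by omega)]

theorem Differentiable.apply_conj_of_conj_iteratedDeriv_zero {f : ℂ → ℂ}
    (hf : Differentiable ℂ f) (hreal : ∀ n, conj (iteratedDeriv n f 0) = iteratedDeriv n f 0)
    (z : ℂ) : f (conj z) = conj (f z) := by
  have hz := (hasSum_taylorSeries_of_entire hf 0 z).map (starRingEnd ℂ).toAddMonoidHom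
    continuous_conj
  refine (hasSum_taylorSeries_of_entire hf 0 (conj z)).unique ?_
  simpa [hreal, Function.comp_def] using hz

theorem wronskian_comp_mul_of_airy {f : ℂ → ℂ} (hf : Differentiable ℂ f)
    (hode : ∀ z, deriv (deriv f) z = z * f z) {a b : ℂ} (hab : a ^ 3 = b ^ 3) (z : ℂ) :
    f (a * z) * (b * deriv f (b * z)) - a * deriv f (a * z) * f (b * z) =
      f 0 * deriv f 0 * (b - a) := by
  have hf' : Differentiable ℂ (deriv f) := hf.deriv
  have hscale : ∀ {g : ℂ → ℂ}, Differentiable ℂ g → ∀ c w : ℂ,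
      HasDerivAt (fun w => g (c * w)) (c * deriv g (c * w)) w := fun hg c w => by
    have := (hg (c * w)).hasDerivAt.comp w ((hasDerivAt_id' w).const_mul c)
    rwa [mul_one, mul_comm] at this
  let W : ℂ → ℂ := fun z => f (a * z) * (b * deriv f (b * z)) - a * deriv f (a * z) * f (b * z)
  have hW : ∀ w, HasDerivAt W 0 w := fun w => by
    have := ((hscale hf a w).mul ((hscale hf' b w).const_mul b)).sub
      (((hscale hf' a w).const_mul a).mul (hscale hf b w))
    refine this.congr_deriv ?_
    rw [hode, hode]
    linear_combination (-(w * f (a * w) * f (b * w))) * hab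
  have := is_const_of_deriv_eq_zero (fun w => (hW w).differentiableAt) (fun w => (hW w).deriv) z 0
  simp only [W, mul_zero] at this
  linear_combination this

theorem exists_continuous_cexp_lift {X : Type*} [TopologicalSpace X] [SimplyConnectedSpace X]
    [LocallyPathConnectedSpace X] {h : X → ℂ} (hc : Continuous h) (hne : ∀ x, h x ≠ 0)
    (x₀ : X) {z₀ : ℂ} (hz₀ : exp z₀ = h x₀) :
    ∃ φ : X → ℂ, Continuous φ ∧ φ x₀ = z₀ ∧ ∀ x, exp (φ x) = h x := by
  obtain ⟨φ, ⟨hφ₀, hφ⟩, -⟩ :=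
    isCoveringMapOn_exp.existsUnique_continuousMap_lifts ⟨h, hc⟩ hz₀ hne
  exact ⟨φ, φ.continuous, hφ₀, fun x => congrFun hφ x⟩

theorem ContinuousAt.analyticAt_of_analyticAt_cexp {𝕜 E : Type*} [NontriviallyNormedField 𝕜]
    [NormedAlgebra 𝕜 ℂ] [NormedAddCommGroup E] [NormedSpace 𝕜 E] {φ : E → ℂ} {x : E}
    (hφ : ContinuousAt φ x) (hexp : AnalyticAt 𝕜 (fun y => exp (φ y)) x) :
    AnalyticAt 𝕜 φ x := by
  have hone : exp (φ x) * exp (-φ x) ∈ slitPlane := by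
    rw [← Complex.exp_add, add_neg_cancel, Complex.exp_zero]
    exact one_mem_slitPlane
  have hprod : AnalyticAt 𝕜 (fun y => exp (φ y) * exp (-φ x)) x := hexp.mul analyticAt_const
  have hlog : AnalyticAt 𝕜 (fun y => φ x + Complex.log (exp (φ y) * exp (-φ x))) x :=
    analyticAt_const.add (((analyticAt_clog hone).restrictScalars (𝕜 := 𝕜)).comp_of_eq hprod rfl)
  refine hlog.congr ?_
  -- near `x` the increment `φ y - φ x` has small imaginary part, so `log ∘ exp` recovers it
  have hsmall : ∀ᶠ y in nhds x, (φ y - φ x).im ∈ Set.Ioo (-π) π := by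
    refine ((continuous_im.continuousAt.comp (hφ.sub continuousAt_const)).eventually_mem
      (isOpen_Ioo.mem_nhds ?_))
    simp [pi_pos]
  filter_upwards [hsmall] with y hy
  rw [← Complex.exp_add, ← sub_eq_add_neg, Complex.log_exp hy.1 hy.2.le]
  ring

theorem exists_analyticOnNhd_arg_lift {E : Type*} [NormedAddCommGroup E] [NormedSpace ℝ E]
    {h : E → ℂ} (han : AnalyticOnNhd ℝ h Set.univ) (hnorm : ∀ x, ‖h x‖ = 1)
    (x₀ : E) {θ₀ : ℝ} (hθ₀ : exp (θ₀ * I) = h x₀) :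
    ∃ θ : E → ℝ, AnalyticOnNhd ℝ θ Set.univ ∧ θ x₀ = θ₀ ∧ ∀ x, exp (θ x * I) = h x := by
  have hc : Continuous h := continuous_iff_continuousAt.mpr fun x => (han x trivial).continuousAt
  have hne : ∀ x, h x ≠ 0 := fun x => norm_ne_zero_iff.mp (by rw [hnorm]; exact one_ne_zero)
  obtain ⟨φ, hφc, hφ₀, hφ⟩ := exists_continuous_cexp_lift hc hne x₀ hθ₀
  have hre : ∀ x, (φ x).re = 0 := fun x => by
    have hx := congrArg norm (hφ x)
    rwa [Complex.norm_exp, hnorm, Real.exp_eq_one_iff] at hx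
  have hφI : ∀ x, ((φ x).im : ℂ) * I = φ x := fun x => by
    apply Complex.ext <;> simp [hre]
  refine ⟨fun x => (φ x).im, fun x _ => ?_, by simp [hφ₀], fun x => by rw [hφI, hφ]⟩
  have hφan : AnalyticAt ℝ φ x := hφc.continuousAt.analyticAt_of_analyticAt_cexp
    (by simpa only [hφ] using han x trivial)
  exact imCLM.analyticAt (φ x) |>.comp hφan

theorem Differentiable.analyticAt_comp_mul_ofReal {f : ℂ → ℂ} (hf : Differentiable ℂ f) (c : ℂ)
    (x : ℝ) : AnalyticAt ℝ (fun ω : ℝ => f (c * ω)) x :=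
  ((hf.analyticAt _).restrictScalars (𝕜 := ℝ)).comp_of_eq
    (analyticAt_const.mul (ofRealCLM.analyticAt x)) rfl

theorem cpow_mul_Gamma_ofReal {a p : ℝ} (ha : 0 ≤ a) :
    (a : ℂ) ^ (p : ℂ) * Complex.Gamma p = ((a ^ p * Real.Gamma p : ℝ) : ℂ) := by
  rw [Complex.ofReal_mul, Complex.ofReal_cpow ha, Complex.Gamma_ofReal]

theorem conj_exp_neg_pi_mul_I_div_three :
    conj (Complex.exp (-(↑π * I) / 3)) = Complex.exp (↑π * I / 3) := by
  rw [← Complex.exp_conj]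
  congr 1
  simp [map_ofNat]

theorem exp_neg_pi_mul_I_div_three_pow_three : Complex.exp (-(↑π * I) / 3) ^ 3 = -1 := by
  rw [← Complex.exp_nat_mul, show ((3 : ℕ) : ℂ) * (-(↑π * I) / 3) = -(↑π * I) by push_cast; ring,
    Complex.exp_neg, Complex.exp_pi_mul_I]
  norm_num

theorem conj_exp_neg_pi_mul_I_div_three_ne :
    conj (Complex.exp (-(↑π * I) / 3)) ≠ Complex.exp (-(↑π * I) / 3) := by
  rw [Ne, Complex.conj_eq_iff_im]
  simp [Complex.exp_im, neg_div, Real.sin_pi_div_three]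

noncomputable def airyPlus (Ai : ℂ → ℂ) (z : ℂ) : ℂ :=
  Complex.exp (-(↑π * I) / 3) * Ai (Complex.exp (-(↑π * I) / 3) * z)

noncomputable def airyMinus (Ai : ℂ → ℂ) (z : ℂ) : ℂ :=
  Complex.exp (↑π * I / 3) * Ai (Complex.exp (↑π * I / 3) * z)

theorem airyMinus_zero (Ai : ℂ → ℂ) :
    airyMinus Ai 0 = Complex.exp (↑(2 * π / 3) * I) * airyPlus Ai 0 := by
  rw [airyPlus, airyMinus, ← mul_assoc, ← Complex.exp_add, mul_zero, mul_zero]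
  congr 3
  push_cast
  ring

namespace IsAiry

variable {Ai : ℂ → ℂ}

theorem apply_zero_eq (hAi : IsAiry Ai) :
    Ai 0 = ((1 / (3 ^ (2 / 3 : ℝ) * Real.Gamma (2 / 3)) : ℝ) : ℂ) := by
  rw [hAi.2.2.2.1, Complex.ofReal_div, ← cpow_mul_Gamma_ofReal (by norm_num)]
  push_cast
  rfl

theorem deriv_zero_eq (hAi : IsAiry Ai) :
    deriv Ai 0 = ((-(1 / (3 ^ (1 / 3 : ℝ) * Real.Gamma (1 / 3))) : ℝ) : ℂ) := by
  rw [hAi.2.2.2.2, Complex.ofReal_neg, Complex.ofReal_div, ← cpow_mul_Gamma_ofReal (by norm_num)]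
  push_cast
  rfl

theorem conj_apply (hAi : IsAiry Ai) (z : ℂ) : Ai (conj z) = conj (Ai z) :=
  hAi.1.apply_conj_of_conj_iteratedDeriv_zero
    (conj_iteratedDeriv_zero_of_airy hAi.1 hAi.2.2.1 (by rw [hAi.apply_zero_eq, conj_ofReal])
      (by rw [hAi.deriv_zero_eq, conj_ofReal])) z

theorem apply_zero_mul_deriv_zero_ne_zero (hAi : IsAiry Ai) : Ai 0 * deriv Ai 0 ≠ 0 := by
  rw [hAi.apply_zero_eq, hAi.deriv_zero_eq, ← Complex.ofReal_mul, Complex.ofReal_ne_zero]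
  exact mul_ne_zero (by positivity) (neg_ne_zero.mpr (by positivity))

theorem apply_mul_ofReal_ne_zero (hAi : IsAiry Ai) {c : ℂ} (hc : conj (c ^ 3) = c ^ 3)
    (hcc : conj c ≠ c) (ω : ℝ) : Ai (c * ω) ≠ 0 := by
  intro hzero
  have hW := wronskian_comp_mul_of_airy hAi.1 hAi.2.2.1 (a := c) (b := conj c)
    (by rw [← map_pow, hc]) ω
  have hzero' : Ai (conj c * ω) = 0 := by
    rw [← conj_ofReal ω, ← map_mul, hAi.conj_apply, hzero, map_zero]
  rw [hzero, hzero', zero_mul, mul_zero, sub_zero] at hW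
  exact mul_ne_zero hAi.apply_zero_mul_deriv_zero_ne_zero (sub_ne_zero.mpr hcc) hW.symm

theorem airyPlus_ofReal_ne_zero (hAi : IsAiry Ai) (ω : ℝ) : airyPlus Ai ω ≠ 0 :=
  mul_ne_zero (Complex.exp_ne_zero _) (hAi.apply_mul_ofReal_ne_zero
    (by rw [exp_neg_pi_mul_I_div_three_pow_three, map_neg, map_one])
    conj_exp_neg_pi_mul_I_div_three_ne ω)

theorem airyMinus_ofReal (hAi : IsAiry Ai) (ω : ℝ) : airyMinus Ai ω = conj (airyPlus Ai ω) := by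
  rw [airyPlus, airyMinus, map_mul, ← hAi.conj_apply, map_mul, conj_ofReal,
    conj_exp_neg_pi_mul_I_div_three]

end IsAiry

/-- There is a real-valued, real analytic branch `L` of `π + i log(A₋/A₊)` on `ℝ`
(i.e. `A₋(ω) = A₊(ω) e^{i(π - L ω)}` for all real `ω`), with `L 0 = π/3`. -/
theorem stmt2 (Ai : ℂ → ℂ) (hAi : IsAiry Ai) :
    ∃ L : ℝ → ℝ, AnalyticOnNhd ℝ L Set.univ ∧ L 0 = π / 3 ∧
      ∀ ω : ℝ,
        Complex.exp (↑π * I / 3) * Ai (Complex.exp (↑π * I / 3) * ω) =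
          Complex.exp (-(↑π * I) / 3) * Ai (Complex.exp (-(↑π * I) / 3) * ω) *
            Complex.exp (I * (↑π - (L ω : ℂ))) := by
  let h : ℝ → ℂ := fun ω => airyMinus Ai ω / airyPlus Ai ω
  have han : AnalyticOnNhd ℝ h Set.univ := fun ω _ =>
    (analyticAt_const.mul (hAi.1.analyticAt_comp_mul_ofReal _ ω)).div
      (analyticAt_const.mul (hAi.1.analyticAt_comp_mul_ofReal _ ω)) (hAi.airyPlus_ofReal_ne_zero ω)
  have hnorm : ∀ ω, ‖h ω‖ = 1 := fun ω => by
    rw [norm_div, hAi.airyMinus_ofReal, Complex.norm_conj,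
      div_self (norm_ne_zero_iff.mpr (hAi.airyPlus_ofReal_ne_zero ω))]
  have h₀ : Complex.exp (↑(2 * π / 3) * I) = h 0 := by
    have hz := hAi.airyPlus_ofReal_ne_zero 0
    rw [Complex.ofReal_zero] at hz
    simp only [h, Complex.ofReal_zero, airyMinus_zero, mul_div_cancel_right₀ _ hz]
  obtain ⟨θ, hθan, hθ₀, hθ⟩ := exists_analyticOnNhd_arg_lift han hnorm 0 h₀
  refine ⟨fun ω => π - θ ω, fun ω _ => analyticAt_const.sub (hθan ω trivial), by
    simp only [hθ₀]; ring, fun ω => ?_⟩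
  change airyMinus Ai ω = airyPlus Ai ω * _
  rw [show I * (↑π - ↑(π - θ ω)) = θ ω * I by push_cast; ring, hθ,
    mul_div_cancel₀ _ (hAi.airyPlus_ofReal_ne_zero ω)]
end

section
/- Writing A_+(ω) = ρ(ω) e^{iθ(ω)} with ρ > 0 and θ real analytic on ℝ, one has the Wronskian-type identity (2ρ(ω))² θ'(ω) = 1/π for all real ω; consequently L'(ω) = 1/(2π ρ(ω)²) > 0 and L is strictly increasing on ℝ. -/
open Complex Real

set_option maxHeartbeats 1000000 in
/-- Writing `A₊(ω) = ρ(ω) e^{iθ(ω)}` with `ρ > 0` and `ρ, θ` real analytic on `ℝ`, one has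
the Wronskian-type identity `(2ρ(ω))² θ'(ω) = 1/π`; consequently, with `L = π + 2θ`,
`L'(ω) = 1/(2π ρ(ω)²) > 0` and `L` is strictly increasing. -/
theorem stmt3 (Ai : ℂ → ℂ) (hAi : IsAiry Ai) (ρ θ : ℝ → ℝ)
    (hρ : AnalyticOnNhd ℝ ρ Set.univ) (hθ : AnalyticOnNhd ℝ θ Set.univ)
    (hρpos : ∀ ω : ℝ, 0 < ρ ω)
    (hfact : ∀ ω : ℝ,
      Complex.exp (-(↑π * I) / 3) * Ai (Complex.exp (-(↑π * I) / 3) * ω) =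
        (ρ ω : ℂ) * Complex.exp (I * (θ ω : ℂ))) :
    (∀ ω : ℝ, (2 * ρ ω) ^ 2 * deriv θ ω = 1 / π) ∧
    (∀ ω : ℝ, deriv (fun ω : ℝ => π + 2 * θ ω) ω = 1 / (2 * π * (ρ ω) ^ 2) ∧
      0 < deriv (fun ω : ℝ => π + 2 * θ ω) ω) ∧
    StrictMono (fun ω : ℝ => π + 2 * θ ω) := by
  obtain ⟨hd1, hd2, hode, h0, h0'⟩ := hAi
  set c : ℂ := Complex.exp (-(↑π * I) / 3) with hc_def
  -- explicit value of c and its conjugate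
  have hcval : c = (1/2 : ℂ) - (↑(Real.sqrt 3)/2) * I := by
    have harg : (-(↑π * I) / 3 : ℂ) = (↑(-(π/3)) : ℂ) * I := by push_cast; ring
    rw [hc_def, harg, Complex.exp_mul_I, ← Complex.ofReal_cos, ← Complex.ofReal_sin,
      Real.cos_neg, Real.sin_neg, Real.cos_pi_div_three, Real.sin_pi_div_three]
    push_cast; ring
  have hconjc : (starRingEnd ℂ) c = (1/2 : ℂ) + (↑(Real.sqrt 3)/2) * I := by
    rw [hcval]
    simp only [map_sub, map_mul, map_div₀, map_one, map_ofNat, Complex.conj_ofReal,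
      Complex.conj_I]
    ring
  have hc3 : c ^ 3 = -1 := by
    rw [hc_def, ← Complex.exp_nat_mul,
      show ((3:ℕ):ℂ) * (-(↑π * I) / 3) = -(↑π * I) by push_cast; ring,
      Complex.exp_neg, Complex.exp_pi_mul_I]
    norm_num
  have hsq : Real.sqrt 3 * Real.sqrt 3 = 3 := Real.mul_self_sqrt (by norm_num)
  have hs3C : ((Real.sqrt 3 : ℝ) : ℂ) * ((Real.sqrt 3 : ℝ) : ℂ) = 3 := by
    exact_mod_cast congrArg (fun x : ℝ => (x : ℂ)) hsq
  have step1 : c * ((starRingEnd ℂ) c) = 1 := by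
    rw [hconjc, hcval]
    linear_combination (-(I^2)/4) * hs3C + (-3/4 : ℂ) * Complex.I_sq
  have step2 : (starRingEnd ℂ) c - c = ↑(Real.sqrt 3) * I := by
    rw [hconjc, hcval]; ring
  -- the rotated Airy function and its derivatives
  set g : ℂ → ℂ := fun z => c * Ai (c * z) with hg_def
  set g1 : ℂ → ℂ := fun z => c ^ 2 * deriv Ai (c * z) with hg1_def
  have hmul : ∀ z : ℂ, HasDerivAt (fun w : ℂ => c * w) c z := fun z => by
    simpa using (hasDerivAt_id z).const_mul c
  have hg1 : ∀ z, HasDerivAt g (g1 z) z := by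
    intro z
    have h := ((hd1 (c*z)).hasDerivAt.comp z (hmul z)).const_mul c
    have he : c * (deriv Ai (c * z) * c) = g1 z := by rw [hg1_def]; ring
    rw [he] at h
    exact h
  have hg2 : ∀ z, HasDerivAt g1 (-z * g z) z := by
    intro z
    have h := ((hd2 (c*z)).hasDerivAt.comp z (hmul z)).const_mul (c ^ 2)
    rw [hode (c*z)] at h
    have he : c ^ 2 * (c * z * Ai (c * z) * c) = -z * g z := by
      have h1 : c ^ 2 * (c * z * Ai (c * z) * c) = c ^ 3 * (z * (c * Ai (c * z))) := by ring
      rw [h1, hc3, hg_def]; ring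
    rw [he] at h
    exact h
  -- restriction to the real line
  set F : ℝ → ℂ := fun ω => g ω with hF_def
  set F1 : ℝ → ℂ := fun ω => g1 ω with hF1_def
  have hF1 : ∀ ω : ℝ, HasDerivAt F (F1 ω) ω := fun ω => (hg1 ω).comp_ofReal
  have hF2 : ∀ ω : ℝ, HasDerivAt F1 (-(ω:ℂ) * F ω) ω := fun ω => (hg2 ω).comp_ofReal
  -- the Wronskian
  set W : ℝ → ℂ := fun ω => F ω * star (F1 ω) - F1 ω * star (F ω) with hW_def
  have hW : ∀ ω : ℝ, HasDerivAt W 0 ω := by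
    intro ω
    have h := ((hF1 ω).mul ((hF2 ω).star)).sub ((hF2 ω).mul ((hF1 ω).star))
    have he : F1 ω * star (F1 ω) + F ω * star (-(ω:ℂ) * F ω)
        - (-(ω:ℂ) * F ω * star (F ω) + F1 ω * star (F1 ω)) = 0 := by
      simp only [star_mul', star_neg, Complex.star_def, Complex.conj_ofReal]
      ring
    rw [he] at h
    exact h
  have hWconst : ∀ ω : ℝ, W ω = W 0 := fun ω =>
    is_const_of_deriv_eq_zero (fun x => (hW x).differentiableAt) (fun x => (hW x).deriv) ω 0
  -- value of the Wronskian at 0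
  have hΓ1 : (0:ℝ) < Real.Gamma (1/3) := Real.Gamma_pos_of_pos (by norm_num)
  have hΓ2 : (0:ℝ) < Real.Gamma (2/3) := Real.Gamma_pos_of_pos (by norm_num)
  have hs3 : (0:ℝ) < Real.sqrt 3 := Real.sqrt_pos.mpr (by norm_num)
  set a : ℝ := 1 / ((3:ℝ) ^ ((2:ℝ)/3) * Real.Gamma (2/3)) with ha_def
  set b : ℝ := -(1 / ((3:ℝ) ^ ((1:ℝ)/3) * Real.Gamma (1/3))) with hb_def
  have hA0 : Ai 0 = (a : ℂ) := by
    rw [h0]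
    have h1 : ((3:ℂ)) ^ ((2:ℂ)/3) = ((((3:ℝ) ^ ((2:ℝ)/3)) : ℝ) : ℂ) := by
      rw [Complex.ofReal_cpow (by norm_num : (0:ℝ) ≤ 3)]; norm_num
    have h2 : Complex.Gamma (2/3) = ((Real.Gamma (2/3) : ℝ) : ℂ) := by
      rw [← Complex.Gamma_ofReal]; norm_num
    rw [h1, h2, ha_def]; push_cast; ring
  have hB0 : deriv Ai 0 = (b : ℂ) := by
    rw [h0']
    have h1 : ((3:ℂ)) ^ ((1:ℂ)/3) = ((((3:ℝ) ^ ((1:ℝ)/3)) : ℝ) : ℂ) := by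
      rw [Complex.ofReal_cpow (by norm_num : (0:ℝ) ≤ 3)]; norm_num
    have h2 : Complex.Gamma (1/3) = ((Real.Gamma (1/3) : ℝ) : ℂ) := by
      rw [← Complex.Gamma_ofReal]; norm_num
    rw [h1, h2, hb_def]; push_cast; ring
  have hXY : (3:ℝ) ^ ((2:ℝ)/3) * (3:ℝ) ^ ((1:ℝ)/3) = 3 := by
    rw [← Real.rpow_add (by norm_num)]; norm_num
  have hΓΓ : Real.Gamma (1/3) * Real.Gamma (2/3) = π / (Real.sqrt 3 / 2) := by
    have h := Real.Gamma_mul_Gamma_one_sub (1/3)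
    rw [show (1:ℝ) - 1/3 = 2/3 by norm_num, show π * (1/3) = π/3 by ring,
      Real.sin_pi_div_three] at h
    exact h
  have hdenom : ((3:ℝ) ^ ((2:ℝ)/3) * Real.Gamma (2/3)) * ((3:ℝ) ^ ((1:ℝ)/3) * Real.Gamma (1/3))
      = 6 * π / Real.sqrt 3 := by
    calc ((3:ℝ) ^ ((2:ℝ)/3) * Real.Gamma (2/3)) * ((3:ℝ) ^ ((1:ℝ)/3) * Real.Gamma (1/3))
        = ((3:ℝ) ^ ((2:ℝ)/3) * (3:ℝ) ^ ((1:ℝ)/3)) * (Real.Gamma (1/3) * Real.Gamma (2/3)) := by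
          ring
      _ = 3 * (π / (Real.sqrt 3 / 2)) := by rw [hXY, hΓΓ]
      _ = 6 * π / Real.sqrt 3 := by rw [div_div_eq_mul_div]; ring
  have hab : a * b = -(Real.sqrt 3 / (6 * π)) := by
    rw [ha_def, hb_def, mul_neg, one_div_mul_one_div, hdenom, one_div_div]
  have hab' : 6 * π * (a * b) = -Real.sqrt 3 := by
    rw [hab]
    field_simp
  have habC' : 6 * ((π:ℝ):ℂ) * ((a:ℂ) * (b:ℂ)) = -((Real.sqrt 3 : ℝ):ℂ) := by
    exact_mod_cast congrArg (fun x : ℝ => (x : ℂ)) hab'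
  have hW0 : 2 * ((π:ℝ):ℂ) * W 0 = -I := by
    have e1 : F 0 = c * (a:ℂ) := by
      show c * Ai (c * ((0:ℝ):ℂ)) = c * (a:ℂ)
      simp only [Complex.ofReal_zero, mul_zero, hA0]
    have e2 : F1 0 = c ^ 2 * (b:ℂ) := by
      show c ^ 2 * deriv Ai (c * ((0:ℝ):ℂ)) = c ^ 2 * (b:ℂ)
      simp only [Complex.ofReal_zero, mul_zero, hB0]
    have e3 : W 0 = F 0 * star (F1 0) - F1 0 * star (F 0) := rfl
    rw [e3, e1, e2]
    simp only [star_mul', star_pow, Complex.star_def, Complex.conj_ofReal]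
    rw [show c * (a:ℂ) * (((starRingEnd ℂ) c)^2 * (b:ℂ))
        - c^2 * (b:ℂ) * ((starRingEnd ℂ) c * (a:ℂ))
        = ((a:ℂ) * (b:ℂ)) * ((c * ((starRingEnd ℂ) c)) * ((starRingEnd ℂ) c - c)) from by ring,
      step1, step2, one_mul]
    linear_combination ((Real.sqrt 3 : ℂ) * I / 3) * habC' + (-(I/3)) * hs3C
  -- derivative of the polar form
  have hρd : ∀ ω : ℝ, HasDerivAt ρ (deriv ρ ω) ω := fun ω =>
    ((hρ ω trivial).differentiableAt).hasDerivAt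
  have hθd : ∀ ω : ℝ, HasDerivAt θ (deriv θ ω) ω := fun ω =>
    ((hθ ω trivial).differentiableAt).hasDerivAt
  have hFG : F = fun ω : ℝ => (ρ ω : ℂ) * Complex.exp (I * (θ ω : ℂ)) := funext fun ω => hfact ω
  have hG : ∀ ω : ℝ, HasDerivAt (fun ω : ℝ => (ρ ω : ℂ) * Complex.exp (I * (θ ω : ℂ)))
      (((deriv ρ ω : ℝ) : ℂ) * Complex.exp (I * (θ ω : ℂ))
        + (ρ ω : ℂ) * (Complex.exp (I * (θ ω : ℂ)) * (I * ((deriv θ ω : ℝ) : ℂ)))) ω := fun ω =>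
    ((hρd ω).ofReal_comp).mul (((hθd ω).ofReal_comp).const_mul I).cexp
  have hF1' : ∀ ω : ℝ, F1 ω = ((deriv ρ ω : ℝ) : ℂ) * Complex.exp (I * (θ ω : ℂ))
      + (ρ ω : ℂ) * (Complex.exp (I * (θ ω : ℂ)) * (I * ((deriv θ ω : ℝ) : ℂ))) := by
    intro ω
    have h := hG ω
    rw [← hFG] at h
    exact (hF1 ω).unique h
  have hWω : ∀ ω : ℝ, W ω = -(2 * I) * (ρ ω : ℂ)^2 * ((deriv θ ω : ℝ) : ℂ) := by
    intro ω
    have hE : Complex.exp (I * (θ ω : ℂ)) * Complex.exp (-(I * (θ ω : ℂ))) = 1 := by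
      rw [← Complex.exp_add]; norm_num
    have hstarE : star (Complex.exp (I * (θ ω : ℂ))) = Complex.exp (-(I * (θ ω : ℂ))) := by
      rw [Complex.star_def, ← Complex.exp_conj]
      congr 1
      simp [Complex.conj_ofReal]
    have e4 : W ω = F ω * star (F1 ω) - F1 ω * star (F ω) := rfl
    have hFeq : F ω = (ρ ω : ℂ) * Complex.exp (I * (θ ω : ℂ)) := hfact ω
    rw [e4, hFeq, hF1' ω]
    simp only [star_add, star_mul', hstarE, Complex.star_def, Complex.conj_ofReal,
      map_mul, Complex.conj_I]
    linear_combination (-(2:ℂ) * I * (ρ ω : ℂ)^2 * ((deriv θ ω : ℝ) : ℂ)) * hE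
  -- the key identity
  have key : ∀ ω : ℝ, 4 * π * (ρ ω)^2 * deriv θ ω = 1 := by
    intro ω
    have h : 2 * ((π:ℝ):ℂ) * (-(2 * I) * (ρ ω : ℂ)^2 * ((deriv θ ω : ℝ) : ℂ)) = -I := by
      rw [← hWω ω, hWconst ω]
      exact hW0
    have h2 : ((4 * π * (ρ ω)^2 * deriv θ ω : ℝ) : ℂ) = ((1:ℝ) : ℂ) := by
      push_cast
      linear_combination I * h
        + (4 * ((π:ℝ):ℂ) * ((ρ ω : ℝ):ℂ)^2 * ((deriv θ ω : ℝ):ℂ) - 1) * Complex.I_sq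
    exact_mod_cast h2
  have hLd : ∀ ω : ℝ, deriv (fun ω : ℝ => π + 2 * θ ω) ω = 1 / (2 * π * (ρ ω)^2) := by
    intro ω
    have h : HasDerivAt (fun ω : ℝ => π + 2 * θ ω) (2 * deriv θ ω) ω :=
      ((hθd ω).const_mul 2).const_add π
    have hpos : (0:ℝ) < 2 * π * (ρ ω)^2 :=
      mul_pos (mul_pos two_pos Real.pi_pos) (pow_pos (hρpos ω) 2)
    rw [h.deriv, eq_div_iff hpos.ne']
    linear_combination key ω
  refine ⟨?_, ?_, ?_⟩
  · intro ω
    rw [eq_div_iff Real.pi_ne_zero]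
    linear_combination key ω
  · intro ω
    refine ⟨hLd ω, ?_⟩
    rw [hLd ω]
    exact div_pos one_pos (mul_pos (mul_pos two_pos Real.pi_pos) (pow_pos (hρpos ω) 2))
  · apply strictMono_of_deriv_pos
    intro ω
    rw [hLd ω]
    exact div_pos one_pos (mul_pos (mul_pos two_pos Real.pi_pos) (pow_pos (hρpos ω) 2))
end

section
/- Let {-ω_k}_{k≥1} be the zeros of the Airy function on the negative real axis, in decreasing order (so ω_k > 0 increasing). Then for each k ≥ 1, L(ω_k) = 2πk, where L(ω) = π + i log(A_-(ω)/A_+(ω)). -/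
open Complex Real

/-!
For a cube root `c` of `-1`, `t ↦ c Ai(c t)` solves `y'' = -t y`. Uniqueness for this linear ODE
gives the connection formula `Ai(-x) = A₊(x) + A₋(x)`, where `A±(x) = e^{±iπ/3} Ai(e^{±iπ/3} x)`,
and the Wronskian of `A₊` and `A₋` is a nonzero constant, so they have no common zero.
Substituting `A₊ = A₋ e^{i(π - L)}` gives `Ai(-x) = A₋(x) (1 - e^{-i L(x)})`: the zeros of
`Ai(-·)` are exactly the points where `L ∈ 2πℤ`. As `L` is increasing with `L 0 = π/3` and range
`(0, ∞)`, both `ω` and `k ↦ L⁻¹(2π(k+1))` enumerate these zeros increasingly, hence agree.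
-/

open Set

local notation "ζ₊" => Complex.exp (↑π * I / 3)
local notation "ζ₋" => Complex.exp (-(↑π * I) / 3)

lemma exp_pi_mul_I_div_three : ζ₊ = 1 / 2 + √3 / 2 * I := by
  rw [show (↑π * I / 3 : ℂ) = ((π / 3 : ℝ) : ℂ) * I by push_cast; ring, exp_mul_I,
    ← ofReal_cos, ← ofReal_sin, Real.cos_pi_div_three, Real.sin_pi_div_three]
  push_cast; ring

lemma exp_neg_pi_mul_I_div_three : ζ₋ = 1 / 2 - √3 / 2 * I := by
  rw [show (-(↑π * I) / 3 : ℂ) = ((-(π / 3) : ℝ) : ℂ) * I by push_cast; ring, exp_mul_I,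
    ← ofReal_cos, ← ofReal_sin, Real.cos_neg, Real.sin_neg, Real.cos_pi_div_three,
    Real.sin_pi_div_three]
  push_cast; ring

lemma exp_pi_mul_I_div_three_add_exp_neg : ζ₊ + ζ₋ = 1 := by
  rw [exp_pi_mul_I_div_three, exp_neg_pi_mul_I_div_three]; ring

lemma exp_pi_mul_I_div_three_mul_exp_neg : ζ₊ * ζ₋ = 1 := by
  rw [← Complex.exp_add, show (↑π * I / 3 + -(↑π * I) / 3 : ℂ) = 0 by ring, Complex.exp_zero]

lemma exp_neg_pi_mul_I_div_three_sub_exp_ne_zero : ζ₋ - ζ₊ ≠ 0 := by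
  rw [exp_pi_mul_I_div_three, exp_neg_pi_mul_I_div_three,
    show (1 / 2 - √3 / 2 * I - (1 / 2 + √3 / 2 * I) : ℂ) = -(√3 * I) by ring]
  simp

/-- `ζ₊` and `ζ₋` are the roots of `z ^ 2 - z + 1`, a factor of `z ^ 3 + 1`. -/
lemma exp_pi_mul_I_div_three_pow_three : ζ₊ ^ 3 = -1 := by
  linear_combination
    (ζ₊ + 1) * (ζ₊ * exp_pi_mul_I_div_three_add_exp_neg - exp_pi_mul_I_div_three_mul_exp_neg)

lemma exp_neg_pi_mul_I_div_three_pow_three_s4 : ζ₋ ^ 3 = -1 := by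
  linear_combination
    (ζ₋ + 1) * (ζ₋ * exp_pi_mul_I_div_three_add_exp_neg - exp_pi_mul_I_div_three_mul_exp_neg)

lemma hasDerivAt_comp_mul_ofReal {g : ℂ → ℂ} (hg : Differentiable ℂ g) (c : ℂ) (t : ℝ) :
    HasDerivAt (fun s : ℝ => g (c * s)) (c * deriv g (c * t)) t := by
  have := ((hg (c * t)).hasDerivAt.comp (t : ℂ) ((hasDerivAt_id _).const_mul c)).comp_ofReal
  simpa [mul_comm] using this

/-- `y'' = -t y` as a first-order system in `(y, y')`. -/
def airyField (t : ℝ) (p : ℂ × ℂ) : ℂ × ℂ := (p.2, -(t : ℂ) * p.1)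

def SolvesAiryField (f : ℝ → ℂ × ℂ) : Prop := ∀ t : ℝ, HasDerivAt f (airyField t (f t)) t

lemma lipschitzWith_airyField (t : ℝ) : LipschitzWith (max 1 ‖t‖₊) (airyField t) := by
  have hmul := (lipschitzWith_smul (-(t : ℂ))).comp (LipschitzWith.prod_fst (α := ℂ) (β := ℂ))
  rw [nnnorm_neg, nnnorm_real, mul_one] at hmul
  exact (LipschitzWith.prod_snd (α := ℂ) (β := ℂ)).prodMk hmul

namespace SolvesAiryField

variable {f g : ℝ → ℂ × ℂ}

lemma zero : SolvesAiryField 0 :=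
  fun t => (hasDerivAt_const t 0).congr_deriv (by ext <;> simp [airyField])

lemma add (hf : SolvesAiryField f) (hg : SolvesAiryField g) : SolvesAiryField (f + g) :=
  fun t => ((hf t).add (hg t)).congr_deriv (by simp [airyField]; ring)

lemma hasDerivAt_fst (hf : SolvesAiryField f) (t : ℝ) :
    HasDerivAt (fun s => (f s).1) (f t).2 t :=
  (hasFDerivAt_fst (𝕜 := ℝ) (E := ℂ) (F := ℂ)).comp_hasDerivAt t (hf t)

lemma hasDerivAt_snd (hf : SolvesAiryField f) (t : ℝ) :
    HasDerivAt (fun s => (f s).2) (-(t : ℂ) * (f t).1) t :=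
  (hasFDerivAt_snd (𝕜 := ℝ) (E := ℂ) (F := ℂ)).comp_hasDerivAt t (hf t)

lemma eq_of_apply_eq (hf : SolvesAiryField f) (hg : SolvesAiryField g) {t₀ : ℝ}
    (h : f t₀ = g t₀) : f = g := by
  funext t
  obtain ⟨b, htb, ht₀b⟩ : ∃ b, |t| < b ∧ |t₀| < b :=
    ⟨max |t| |t₀| + 1, by linarith [le_max_left |t| |t₀|], by linarith [le_max_right |t| |t₀|]⟩
  have hv : ∀ s ∈ Ioo (-b) b, LipschitzOnWith (max 1 ‖b‖₊) (airyField s) univ := by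
    intro s hs
    refine ((lipschitzWith_airyField s).weaken (max_le_max le_rfl ?_)).lipschitzOnWith
    rw [← NNReal.coe_le_coe, coe_nnnorm, coe_nnnorm, Real.norm_eq_abs, Real.norm_eq_abs]
    exact (abs_le.2 ⟨hs.1.le, hs.2.le⟩).trans (le_abs_self b)
  have hmem : ∀ s, s ∈ Ioo (-b) b ↔ |s| < b := fun s => by rw [abs_lt, mem_Ioo]
  exact ODE_solution_unique_of_mem_Ioo hv ((hmem t₀).2 ht₀b)
    (fun s _ => ⟨hf s, trivial⟩) (fun s _ => ⟨hg s, trivial⟩) h ((hmem t).2 htb)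

end SolvesAiryField

def wronskian (f g : ℝ → ℂ × ℂ) (t : ℝ) : ℂ := (f t).1 * (g t).2 - (f t).2 * (g t).1

lemma SolvesAiryField.wronskian_eq {f g : ℝ → ℂ × ℂ} (hf : SolvesAiryField f)
    (hg : SolvesAiryField g) (t s : ℝ) : wronskian f g t = wronskian f g s := by
  have hW : ∀ t, HasDerivAt (wronskian f g) 0 t := fun t =>
    (((hf.hasDerivAt_fst t).mul (hg.hasDerivAt_snd t)).sub
      ((hf.hasDerivAt_snd t).mul (hg.hasDerivAt_fst t))).congr_deriv (by ring)
  exact is_const_of_deriv_eq_zero (fun t => (hW t).differentiableAt) (fun t => (hW t).deriv) t s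

noncomputable def airyRay (Ai : ℂ → ℂ) (c : ℂ) (t : ℝ) : ℂ × ℂ :=
  (c * Ai (c * t), c ^ 2 * deriv Ai (c * t))

namespace IsAiry

variable {Ai : ℂ → ℂ}

lemma solvesAiryField_airyRay (hAi : IsAiry Ai) {c : ℂ} (hc : c ^ 3 = -1) :
    SolvesAiryField (airyRay Ai c) := fun t =>
  (((hasDerivAt_comp_mul_ofReal hAi.1 c t).const_mul c).prodMk
    ((hasDerivAt_comp_mul_ofReal hAi.2.1 c t).const_mul (c ^ 2))).congr_deriv <| by
      rw [hAi.2.2.1]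
      ext
      · simp only [airyRay, airyField]; ring
      · simp only [airyRay, airyField]; linear_combination (t : ℂ) * Ai (c * t) * c * hc

lemma apply_zero_ne_zero (hAi : IsAiry Ai) : Ai 0 ≠ 0 := by
  rw [hAi.2.2.2.1]
  refine one_div_ne_zero (mul_ne_zero (cpow_ne_zero_iff.2 (.inl three_ne_zero))
    (Gamma_ne_zero_of_re_pos ?_))
  norm_num

lemma deriv_zero_ne_zero (hAi : IsAiry Ai) : deriv Ai 0 ≠ 0 := by
  rw [hAi.2.2.2.2]
  refine neg_ne_zero.2 (one_div_ne_zero (mul_ne_zero (cpow_ne_zero_iff.2 (.inl three_ne_zero))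
    (Gamma_ne_zero_of_re_pos ?_)))
  norm_num

/-- The rays of the three cube roots of `-1` add up to a solution vanishing at `t = 0`. -/
lemma apply_neg (hAi : IsAiry Ai) (x : ℝ) :
    Ai (-(x : ℂ)) = ζ₊ * Ai (ζ₊ * x) + ζ₋ * Ai (ζ₋ * x) := by
  have hsol := ((hAi.solvesAiryField_airyRay (c := -1) (by norm_num)).add
    (hAi.solvesAiryField_airyRay exp_pi_mul_I_div_three_pow_three)).add
    (hAi.solvesAiryField_airyRay exp_neg_pi_mul_I_div_three_pow_three_s4)
  have h0 := hsol.eq_of_apply_eq SolvesAiryField.zero (t₀ := 0) <| by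
    ext
    · simp only [airyRay, Pi.add_apply, Prod.fst_add, ofReal_zero, mul_zero, Pi.zero_apply,
        Prod.fst_zero]
      linear_combination Ai 0 * exp_pi_mul_I_div_three_add_exp_neg
    · simp only [airyRay, Pi.add_apply, Prod.snd_add, ofReal_zero, mul_zero, Pi.zero_apply,
        Prod.snd_zero]
      linear_combination deriv Ai 0 * ((ζ₊ + ζ₋ + 1) * exp_pi_mul_I_div_three_add_exp_neg -
        2 * exp_pi_mul_I_div_three_mul_exp_neg)
  have hx := congrArg (fun f => (f x).1) h0
  simp only [airyRay, Pi.add_apply, Prod.fst_add, Pi.zero_apply, Prod.fst_zero, neg_one_mul] at hx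
  linear_combination -hx

lemma wronskian_airyRay (hAi : IsAiry Ai) (t : ℝ) :
    wronskian (airyRay Ai ζ₊) (airyRay Ai ζ₋) t = (ζ₋ - ζ₊) * Ai 0 * deriv Ai 0 := by
  rw [(hAi.solvesAiryField_airyRay exp_pi_mul_I_div_three_pow_three).wronskian_eq
    (hAi.solvesAiryField_airyRay exp_neg_pi_mul_I_div_three_pow_three_s4) t 0]
  simp only [wronskian, airyRay, ofReal_zero, mul_zero]
  linear_combination (ζ₋ - ζ₊) * Ai 0 * deriv Ai 0 * exp_pi_mul_I_div_three_mul_exp_neg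

lemma rotated_ne_zero_or_ne_zero (hAi : IsAiry Ai) (x : ℝ) :
    ζ₊ * Ai (ζ₊ * x) ≠ 0 ∨ ζ₋ * Ai (ζ₋ * x) ≠ 0 := by
  by_contra! h
  have hW := hAi.wronskian_airyRay x
  rw [wronskian, airyRay, airyRay, h.1, h.2, zero_mul, mul_zero, sub_zero] at hW
  exact mul_ne_zero (mul_ne_zero exp_neg_pi_mul_I_div_three_sub_exp_ne_zero
    hAi.apply_zero_ne_zero) hAi.deriv_zero_ne_zero hW.symm

lemma apply_neg_eq_zero_iff (hAi : IsAiry Ai) {x θ : ℝ}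
    (hrel : ζ₊ * Ai (ζ₊ * x) = ζ₋ * Ai (ζ₋ * x) * Complex.exp (I * (↑π - (θ : ℂ)))) :
    Ai (-(x : ℂ)) = 0 ↔ ∃ n : ℤ, θ = 2 * π * n := by
  have hne : ζ₋ * Ai (ζ₋ * x) ≠ 0 := fun h =>
    (hAi.rotated_ne_zero_or_ne_zero x).elim (· (by rw [hrel, h, zero_mul])) (· h)
  have hfactor : Ai (-(x : ℂ)) = ζ₋ * Ai (ζ₋ * x) * (1 - Complex.exp (-θ * I)) := by
    rw [hAi.apply_neg, hrel, show I * (↑π - (θ : ℂ)) = ↑π * I + -θ * I by ring, Complex.exp_add,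
      Complex.exp_pi_mul_I]
    ring
  rw [hfactor, mul_eq_zero, or_iff_right hne, sub_eq_zero, eq_comm, Complex.exp_eq_one_iff]
  refine ⟨fun ⟨n, hn⟩ => ⟨-n, ?_⟩, fun ⟨n, hn⟩ => ⟨-n, ?_⟩⟩
  · rw [← mul_assoc, mul_left_inj' I_ne_zero] at hn
    have hn' : -θ = n * (2 * π) := by exact_mod_cast hn
    push_cast
    linarith
  · rw [hn]; push_cast; ring

end IsAiry

lemma exists_int_eq_two_pi_mul_iff {θ : ℝ} (hθ : 0 < θ) :
    (∃ n : ℤ, θ = 2 * π * n) ↔ ∃ k : ℕ, θ = 2 * π * (k + 1) := by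
  refine ⟨fun ⟨n, hn⟩ => ?_, fun ⟨k, hk⟩ => ⟨k + 1, by rw [hk]; push_cast; ring⟩⟩
  have hn0 : 0 < n := by
    have : (0 : ℝ) < n := pos_of_mul_pos_right (hn ▸ hθ) (by positivity)
    exact_mod_cast this
  obtain ⟨k, rfl⟩ := Int.eq_succ_of_zero_lt hn0
  exact ⟨k, by rw [hn]; push_cast; ring⟩

theorem stmt4_general (Ai : ℂ → ℂ) (hAi : IsAiry Ai)
    (ω : ℕ → ℝ) (hωmono : StrictMono ω)
    (hωzero : ∀ k, Ai (-(ω k : ℂ)) = 0)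
    (hωall : ∀ x : ℝ, 0 < x → Ai (-(x : ℂ)) = 0 → ∃ k, x = ω k)
    (L : ℝ → ℝ) (hL0 : L 0 = π / 3)
    (hLmono : StrictMono L) (hLrange : Set.range L = Set.Ioi 0)
    (hLrel : ∀ x : ℝ,
      Complex.exp (↑π * I / 3) * Ai (Complex.exp (↑π * I / 3) * x) =
        Complex.exp (-(↑π * I) / 3) * Ai (Complex.exp (-(↑π * I) / 3) * x) *
          Complex.exp (I * (↑π - (L x : ℂ)))) :
    ∀ k : ℕ, L (ω k) = 2 * π * (k + 1) := by
  have hzero (x : ℝ) : Ai (-(x : ℂ)) = 0 ↔ ∃ k : ℕ, L x = 2 * π * (k + 1) :=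
    (hAi.apply_neg_eq_zero_iff (hLrel x)).trans
      (exists_int_eq_two_pi_mul_iff (hLrange.subset (mem_range_self x)))
  have hsub : range (L ∘ ω) ⊆ range fun k : ℕ => 2 * π * (k + 1) := by
    rintro _ ⟨k, rfl⟩
    obtain ⟨n, hn⟩ := (hzero (ω k)).1 (hωzero k)
    exact ⟨n, hn.symm⟩
  have hsup : range (fun k : ℕ => 2 * π * (k + 1)) ⊆ range (L ∘ ω) := by
    rintro _ ⟨n, rfl⟩
    obtain ⟨x, hx⟩ : 2 * π * (n + 1) ∈ range L := hLrange ▸ mem_Ioi.2 (by positivity)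
    have hxpos : 0 < x := hLmono.lt_iff_lt.1 <| by
      rw [hL0, hx]; nlinarith [pi_pos, (n.cast_nonneg : (0 : ℝ) ≤ n)]
    obtain ⟨k, rfl⟩ := hωall x hxpos ((hzero x).2 ⟨n, hx⟩)
    exact ⟨k, hx⟩
  have hmono : StrictMono fun k : ℕ => 2 * π * (k + 1) := fun a b hab => by dsimp only; gcongr
  exact congrFun (((hLmono.comp hωmono).range_inj hmono).1 (hsub.antisymm hsup))

/-- Let `-ω k` (for `k ≥ 1`, here indexed by `k : ℕ` with `ω k` the `(k+1)`-st zero) be the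
zeros of the Airy function on the negative real axis, with `ω` positive and strictly
increasing, enumerating all of them. Let `L` be the real analytic strictly increasing branch
of `π + i log(A₋/A₊)` with `L 0 = π/3`, mapping `ℝ` bijectively onto `(0, ∞)`.
Then `L (ω k) = 2π(k+1)` for every `k`. -/
theorem stmt4 (Ai : ℂ → ℂ) (hAi : IsAiry Ai)
    (ω : ℕ → ℝ) (hωpos : ∀ k, 0 < ω k) (hωmono : StrictMono ω)
    (hωzero : ∀ k, Ai (-(ω k : ℂ)) = 0)
    (hωall : ∀ x : ℝ, 0 < x → Ai (-(x : ℂ)) = 0 → ∃ k, x = ω k)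
    (L : ℝ → ℝ) (hLa : AnalyticOnNhd ℝ L Set.univ) (hL0 : L 0 = π / 3)
    (hLmono : StrictMono L) (hLrange : Set.range L = Set.Ioi 0)
    (hLrel : ∀ x : ℝ,
      Complex.exp (↑π * I / 3) * Ai (Complex.exp (↑π * I / 3) * x) =
        Complex.exp (-(↑π * I) / 3) * Ai (Complex.exp (-(↑π * I) / 3) * x) *
          Complex.exp (I * (↑π - (L x : ℂ)))) :
    ∀ k : ℕ, L (ω k) = 2 * π * (k + 1) :=
  stmt4_general Ai hAi ω hωmono hωzero hωall L hL0 hLmono hLrange hLrel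
end

section
/- (Airy–Poisson summation formula) For every smooth compactly supported function φ on ℝ, Σ_{N ∈ ℤ} ∫_ℝ e^{-iNL(ω)} φ(ω) dω = 2π Σ_{k ≥ 1} φ(ω_k)/L'(ω_k), where both sides converge. -/
open Complex Real

open MeasureTheory Filter Topology

/-- A smooth compactly supported function is a Schwartz map. -/
noncomputable def toSchwartzAux (f : ℝ → ℂ) (hf : ContDiff ℝ ((⊤:ℕ∞) : WithTop ℕ∞) f)
    (hc : HasCompactSupport f) : SchwartzMap ℝ ℂ where
  toFun := f
  smooth' := hf
  decay' := by
    intro k n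
    have hcont : Continuous fun x : ℝ => ‖x‖ ^ k * ‖iteratedFDeriv ℝ n f x‖ :=
      (continuous_norm.pow k).mul (hf.continuous_iteratedFDeriv (mod_cast le_top)).norm
    have hsupp : HasCompactSupport fun x : ℝ => ‖x‖ ^ k * ‖iteratedFDeriv ℝ n f x‖ :=
      ((hc.iteratedFDeriv n).norm).mul_left
    obtain ⟨x₀, hx₀⟩ := hcont.exists_forall_ge_of_hasCompactSupport hsupp
    exact ⟨_, hx₀⟩

/-- Airy–Poisson summation formula: for every smooth compactly supported `φ`,
`Σ_{N∈ℤ} ∫_ℝ e^{-iN L(ω)} φ(ω) dω = 2π Σ_{k≥1} φ(ω k)/L'(ω k)`, both sides converging.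
Here `L` is smooth, strictly increasing, maps `ℝ` bijectively onto `(0,∞)` with `L' > 0`,
and `-ω k` is the `(k+1)`-st Airy zero, with `L (ω k) = 2π(k+1)`. -/
theorem stmt10 (Ai : ℂ → ℂ) (hAi : IsAiry Ai)
    (L : ℝ → ℝ) (hLsmooth : ContDiff ℝ (⊤ : ℕ∞) L) (hLmono : StrictMono L)
    (hLrange : Set.range L = Set.Ioi 0) (hLderiv : ∀ x : ℝ, 0 < deriv L x)
    (ω : ℕ → ℝ) (hωzero : ∀ k, Ai (-(ω k : ℂ)) = 0)
    (hωL : ∀ k : ℕ, L (ω k) = 2 * π * (k + 1))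
    (φ : ℝ → ℂ) (hφ : ContDiff ℝ (⊤ : ℕ∞) φ) (hφc : HasCompactSupport φ) :
    Summable (fun N : ℤ => ∫ x : ℝ, Complex.exp (-I * (N : ℂ) * (L x : ℂ)) * φ x) ∧
    Summable (fun k : ℕ => φ (ω k) / ((deriv L (ω k) : ℝ) : ℂ)) ∧
    (∑' N : ℤ, ∫ x : ℝ, Complex.exp (-I * (N : ℂ) * (L x : ℂ)) * φ x) =
      2 * (π : ℂ) * ∑' k : ℕ, φ (ω k) / ((deriv L (ω k) : ℝ) : ℂ) := by
  clear hAi hωzero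
  have hLpos : ∀ x, 0 < L x := fun x => by
    have : L x ∈ Set.range L := Set.mem_range_self x
    rw [hLrange] at this; exact this
  -- the inverse function `g` of `L`
  have hbij : ∀ u : ℝ, 0 < u → ∃ x, L x = u := fun u hu => by
    have : u ∈ Set.range L := by rw [hLrange]; exact hu
    exact this
  set g : ℝ → ℝ := fun u => if h : 0 < u then (hbij u h).choose else 0 with hg_def
  have hLg : ∀ u : ℝ, 0 < u → L (g u) = u := fun u hu => by
    simp only [hg_def, dif_pos hu]; exact (hbij u hu).choose_spec
  have hgL : ∀ x : ℝ, g (L x) = x := fun x =>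
    hLmono.injective (hLg (L x) (hLpos x))
  -- the transported function ψ
  set ψ : ℝ → ℂ := fun u =>
    if 0 < u then φ (g u) / ((deriv L (g u) : ℝ) : ℂ) else 0 with hψ_def
  have hψL : ∀ x : ℝ, ψ (L x) = φ x / ((deriv L x : ℝ) : ℂ) := fun x => by
    simp only [hψ_def, if_pos (hLpos x), hgL x]
  have hψ0 : ∀ u : ℝ, u ≤ 0 → ψ u = 0 := fun u hu => by
    simp only [hψ_def, if_neg (not_lt.2 hu)]
  -- support bounds
  obtain ⟨a, b, ha, hab⟩ : ∃ a b : ℝ, 0 < a ∧ ∀ u, u ∉ Set.Icc a b → ψ u = 0 := by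
    rcases (tsupport φ).eq_empty_or_nonempty with h | h
    · refine ⟨1, 0, one_pos, fun u _ => ?_⟩
      have hφ0 : ∀ x, φ x = 0 := fun x => by
        by_contra hx
        exact absurd (subset_tsupport φ hx) (by simp [h])
      simp only [hψ_def, hφ0]
      split <;> simp
    · have hK : IsCompact (L '' tsupport φ) := hφc.image hLsmooth.continuous
      have hKne : (L '' tsupport φ).Nonempty := h.image L
      refine ⟨sInf (L '' tsupport φ), sSup (L '' tsupport φ), ?_, ?_⟩
      · have : sInf (L '' tsupport φ) ∈ L '' tsupport φ := hK.sInf_mem hKne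
        obtain ⟨x, _, hx⟩ := this
        rw [← hx]; exact hLpos x
      · intro u hu
        rcases le_or_gt u 0 with h0 | h0
        · exact hψ0 u h0
        · simp only [hψ_def, if_pos h0]
          have : φ (g u) = 0 := by
            by_contra hx
            have hmem : g u ∈ tsupport φ := subset_tsupport φ hx
            have : L (g u) ∈ L '' tsupport φ := ⟨g u, hmem, rfl⟩
            rw [hLg u h0] at this
            exact hu ⟨csInf_le hK.isBounded.bddBelow this, le_csSup hK.isBounded.bddAbove this⟩
          simp [this]
  have hψc : HasCompactSupport ψ :=
    HasCompactSupport.intro isCompact_Icc fun u hu => hab u hu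
  -- smoothness of ψ
  have hψs : ContDiff ℝ ((⊤:ℕ∞) : WithTop ℕ∞) ψ := by
    rw [contDiff_iff_contDiffAt]
    intro u₀
    rcases lt_or_ge u₀ a with hlt | hge
    · refine contDiffAt_const (c := 0) |>.congr_of_eventuallyEq ?_
      filter_upwards [Iio_mem_nhds hlt] with u hu
      exact hab u fun hc => absurd hc.1 (not_le.2 hu)
    · have hu₀ : 0 < u₀ := ha.trans_le hge
      set x₀ := g u₀ with hx₀_def
      have hLx₀ : L x₀ = u₀ := hLg u₀ hu₀
      have hd : deriv L x₀ ≠ 0 := (hLderiv x₀).ne'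
      set e : ℝ ≃L[ℝ] ℝ :=
        ContinuousLinearEquiv.unitsEquivAut ℝ (Units.mk0 (deriv L x₀) hd) with he_def
      have hee : (↑e : ℝ →L[ℝ] ℝ) = ContinuousLinearMap.smulRight (1 : ℝ →L[ℝ] ℝ) (deriv L x₀) := by
        ext y
        simp [he_def, ContinuousLinearEquiv.unitsEquivAut, mul_comm]
      have hDL : HasFDerivAt L (↑e : ℝ →L[ℝ] ℝ) x₀ := by
        have h := ((hLsmooth.differentiable (by simp)) x₀).hasDerivAt
        rw [hasDerivAt_iff_hasFDerivAt] at h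
        rw [hee]
        exact h
      have hCL : ContDiffAt ℝ (⊤ : ℕ∞) L x₀ := hLsmooth.contDiffAt
      have h1 : ((⊤ : ℕ∞) : WithTop ℕ∞) ≠ 0 := by simp
      have hsf := hCL.hasStrictFDerivAt' hDL h1
      have hloc : ContDiffAt ℝ (⊤ : ℕ∞) (hsf.localInverse L e x₀) u₀ := by
        have h := hCL.to_localInverse (hf' := hDL) (hn := h1)
        rw [hLx₀] at h
        exact h
      have hEq : g =ᶠ[𝓝 u₀] hsf.localInverse L e x₀ := by
        have hri := hsf.eventually_right_inverse
        rw [hLx₀] at hri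
        filter_upwards [hri, Ioi_mem_nhds hu₀] with u h1u h2u
        exact hLmono.injective (by rw [hLg u h2u, h1u])
      have hgC : ContDiffAt ℝ (⊤ : ℕ∞) g u₀ := hloc.congr_of_eventuallyEq hEq
      have hginf : ContDiffAt ℝ ((⊤:ℕ∞) : WithTop ℕ∞) g u₀ := hgC.of_le (by simp)
      have hnum : ContDiffAt ℝ ((⊤:ℕ∞) : WithTop ℕ∞) (fun u => φ (g u)) u₀ :=
        ContDiffAt.comp u₀ ((hφ.of_le ((by simp) : ((⊤:ℕ∞) : WithTop ℕ∞) ≤ ((⊤:ℕ∞) : WithTop ℕ∞))).contDiffAt) hginf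
      have hL' : ContDiff ℝ ((⊤:ℕ∞) : WithTop ℕ∞) (deriv L) :=
        (contDiff_infty_iff_deriv.mp (hLsmooth.of_le (by simp))).2
      have hden : ContDiffAt ℝ ((⊤:ℕ∞) : WithTop ℕ∞)
          (fun u => ((deriv L (g u) : ℝ) : ℂ)) u₀ :=
        ContDiffAt.comp (g := fun t : ℝ => (t : ℂ)) u₀
          Complex.ofRealCLM.contDiff.contDiffAt ((hL'.contDiffAt).comp u₀ hginf)
      have hne : ((deriv L (g u₀) : ℝ) : ℂ) ≠ 0 :=
        Complex.ofReal_ne_zero.2 (hLderiv _).ne'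
      refine (hnum.mul (hden.inv hne)).congr_of_eventuallyEq ?_
      filter_upwards [Ioi_mem_nhds hu₀] with u hu
      simp only [hψ_def, if_pos (Set.mem_Ioi.mp hu), div_eq_mul_inv, Pi.inv_apply]
  -- the Schwartz function v ↦ ψ (2π v)
  have h2π : (0:ℝ) < 2 * π := by positivity
  have hψ₂s : ContDiff ℝ ((⊤:ℕ∞) : WithTop ℕ∞) (fun v : ℝ => ψ (2 * π * v)) :=
    hψs.comp (contDiff_const.mul contDiff_id)
  have hψ₂c : HasCompactSupport fun v : ℝ => ψ (2 * π * v) := by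
    refine HasCompactSupport.intro (isCompact_Icc (a := a / (2*π)) (b := b / (2*π)))
      fun v hv => ?_
    refine hab _ fun hmem => hv ?_
    exact ⟨(div_le_iff₀' h2π).2 hmem.1, (le_div_iff₀' h2π).2 hmem.2⟩
  set F : SchwartzMap ℝ ℂ := toSchwartzAux _ hψ₂s hψ₂c with hF_def
  have hFapp : ∀ v : ℝ, F v = ψ (2 * π * v) := fun v => rfl
  -- change of variables: the integral equals 2π times the Fourier transform of F
  have key : ∀ N : ℤ, (∫ x : ℝ, Complex.exp (-I * (N : ℂ) * (L x : ℂ)) * φ x)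
      = ((2 * π : ℝ) : ℂ) * FourierTransform.fourier (⇑F) (N : ℝ) := by
    intro N
    set G : ℝ → ℂ := fun u => Complex.exp (-I * (N : ℂ) * (u : ℂ)) * ψ u with hG_def
    have h1 : FourierTransform.fourier (⇑F) (N : ℝ) = |(2*π:ℝ)⁻¹| • ∫ u : ℝ, G u := by
      rw [Real.fourier_real_eq_integral_exp_smul]
      rw [show (∫ v : ℝ, Complex.exp (↑(-2 * π * v * (N:ℝ)) * I) • F v)
          = ∫ v : ℝ, G (2 * π * v) by
        congr 1 with v
        rw [hFapp v]
        simp only [hG_def, smul_eq_mul]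
        congr 2
        push_cast
        ring]
      exact MeasureTheory.Measure.integral_comp_mul_left G (2*π)
    have h2 : (∫ u : ℝ, G u) = ∫ x : ℝ, Complex.exp (-I * (N : ℂ) * (L x : ℂ)) * φ x := by
      have hzero : ∀ u ∉ Set.Ioi (0:ℝ), G u = 0 := fun u hu => by
        simp only [hG_def, hψ0 u (not_lt.1 hu), mul_zero]
      rw [← setIntegral_eq_integral_of_forall_compl_eq_zero hzero, ← hLrange,
        ← Set.image_univ,
        MeasureTheory.integral_image_eq_integral_abs_deriv_smul MeasurableSet.univ
          (fun x _ => ((hLsmooth.differentiable (by simp)) x).hasDerivAt.hasDerivWithinAt)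
          (hLmono.injective.injOn) G,
        MeasureTheory.Measure.restrict_univ]
      congr 1 with x
      rw [abs_of_pos (hLderiv x)]
      simp only [hG_def, hψL x, Complex.real_smul]
      have hne : ((deriv L x : ℝ) : ℂ) ≠ 0 := Complex.ofReal_ne_zero.2 (hLderiv x).ne'
      field_simp
    rw [h1, abs_of_pos (inv_pos.2 h2π), Complex.real_smul, ← mul_assoc,
      ← Complex.ofReal_mul, mul_inv_cancel₀ h2π.ne', Complex.ofReal_one, one_mul]
    exact h2.symm
  -- summability of the Fourier side
  have hFT : ⇑(SchwartzMap.fourierTransformCLM ℝ F) = FourierTransform.fourier ⇑F :=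
    congrArg DFunLike.coe (SchwartzMap.fourierTransformCLM_apply ℝ F)
  have hFsum : Summable fun n : ℤ => FourierTransform.fourier (⇑F) (n : ℝ) := by
    rw [← hFT]
    exact summable_of_isBigO (Real.summable_abs_int_rpow one_lt_two)
      (((SchwartzMap.fourierTransformCLM ℝ F).isBigO_cocompact_rpow (-2)).comp_tendsto
        Int.tendsto_coe_cofinite)
  have hS1 : Summable (fun N : ℤ => ∫ x : ℝ, Complex.exp (-I * (N : ℂ) * (L x : ℂ)) * φ x) :=
    (hFsum.mul_left (((2 * π : ℝ)) : ℂ)).congr fun N => (key N).symm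
  -- the values of ψ at the lattice points
  have hval : ∀ k : ℕ, ψ (2 * π * ((k : ℝ) + 1)) = φ (ω k) / ((deriv L (ω k) : ℝ) : ℂ) := by
    intro k
    rw [← hωL k, hψL]
  have hzero' : ∀ n : ℤ, n ≤ 0 → ψ (2 * π * (n : ℝ)) = 0 := fun n hn =>
    hψ0 _ (mul_nonpos_of_nonneg_of_nonpos h2π.le (by exact_mod_cast hn))
  -- summability of the ℕ-indexed side
  obtain ⟨M, hM⟩ := exists_nat_gt (b / (2 * π))
  have hlarge : ∀ k : ℕ, M ≤ k → φ (ω k) / ((deriv L (ω k) : ℝ) : ℂ) = 0 := by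
    intro k hk
    rw [← hval k]
    refine hab _ fun hmem => ?_
    have h1 : b / (2 * π) < (k : ℝ) + 1 := hM.trans_le (by exact_mod_cast Nat.le_succ_of_le hk)
    have h2 : b < 2 * π * ((k : ℝ) + 1) := (div_lt_iff₀' h2π).1 h1
    exact absurd hmem.2 (not_le.2 h2)
  have hS2 : Summable (fun k : ℕ => φ (ω k) / ((deriv L (ω k) : ℝ) : ℂ)) :=
    summable_of_ne_finset_zero (s := Finset.range M) fun k hk =>
      hlarge k (by simpa [Finset.mem_range, not_lt] using hk)
  refine ⟨hS1, hS2, ?_⟩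
  -- Poisson summation for F
  have hP : (∑' n : ℤ, ψ (2 * π * (n : ℝ))) = ∑' n : ℤ, FourierTransform.fourier (⇑F) (n : ℝ) := by
    have h := SchwartzMap.tsum_eq_tsum_fourier F 0
    simp only [zero_add, QuotientAddGroup.mk_zero, fourier_eval_zero, mul_one, hFT, SchwartzMap.fourier_coe, hFapp] at h
    exact h
  -- reindex the sum over ℤ to a sum over ℕ
  have hNZ : (∑' n : ℤ, ψ (2 * π * (n : ℝ)))
      = ∑' k : ℕ, φ (ω k) / ((deriv L (ω k) : ℝ) : ℂ) := by
    refine tsum_eq_tsum_of_ne_zero_bij (fun k => ((k : ℕ) : ℤ) + 1) ?_ ?_ ?_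
    · intro k1 k2 h
      have h' : ((k1 : ℕ) : ℤ) + 1 = ((k2 : ℕ) : ℤ) + 1 := h
      exact Subtype.ext (by omega)
    · intro n hn
      have hn' : ψ (2 * π * (n : ℝ)) ≠ 0 := hn
      have hpos : 1 ≤ n := by
        by_contra hc
        exact hn' (hzero' n (by omega))
      refine ⟨⟨(n - 1).toNat, ?_⟩, ?_⟩
      · show φ (ω (n - 1).toNat) / ((deriv L (ω (n - 1).toNat) : ℝ) : ℂ) ≠ 0
        rw [← hval]
        have : (((n - 1).toNat : ℝ) + 1) = (n : ℝ) := by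
          have : (((n - 1).toNat : ℤ) : ℝ) = ((n : ℝ) - 1) := by
            rw [Int.toNat_of_nonneg (by omega)]; push_cast; ring
          push_cast at this ⊢
          linarith
        rwa [this]
      · show (((n - 1).toNat : ℤ) + 1) = n
        omega
    · rintro ⟨k, hk⟩
      show ψ (2 * π * ((((k : ℤ) + 1) : ℤ) : ℝ)) = _
      rw [show ((((k : ℤ) + 1) : ℤ) : ℝ) = (k : ℝ) + 1 by push_cast; ring]
      exact hval k
  calc (∑' N : ℤ, ∫ x : ℝ, Complex.exp (-I * (N : ℂ) * (L x : ℂ)) * φ x)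
      = ∑' N : ℤ, ((2 * π : ℝ) : ℂ) * FourierTransform.fourier (⇑F) (N : ℝ) := tsum_congr key
    _ = ((2 * π : ℝ) : ℂ) * ∑' N : ℤ, FourierTransform.fourier (⇑F) (N : ℝ) := tsum_mul_left
    _ = ((2 * π : ℝ) : ℂ) * ∑' n : ℤ, ψ (2 * π * (n : ℝ)) := by rw [hP]
    _ = 2 * (π : ℂ) * ∑' k : ℕ, φ (ω k) / ((deriv L (ω k) : ℝ) : ℂ) := by
        rw [hNZ]; push_cast; ring
end
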